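/- arXiv:1510.00904 — 4 statements merged into one kernel-verified Lean document; each statement's English description precedes it below -/
import Mathlib

section
/- For all real numbers a, b, c, d, e one has (c²+d²+e²+a²+b²+ab)² ≥ (a−b)²c² + (2b+a)²d² + (2a+b)²e², with equality if and only if c(a+b) = 0, c² + ab = 0, da = 0, d² = b² + ab, eb = 0, and e² = a² + ab. -/
/-!
The defect `(c² + d² + e² + a² + b² + ab)² - ((a-b)²c² + (2b+a)²d² + (2a+b)²e²)` is the sum of
squares `T² + 3(c(a+b))² + 3(da)² + 3(eb)²` with `T = c² + d² + e² - a² - b² - ab`, so it is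
nonnegative and vanishes exactly when the four bases do. Writing `u = a`, `v = b`, `w = -(a+b)`,
those four conditions become cyclically symmetric, and over the reals they force the three
finer conditions: if `u`, `v`, `w` were all nonzero then `c = d = e = 0` and `T = 0` would give
`u² + v² + w² = 0`; otherwise one of them vanishes and a short case split finishes.
-/

lemma sq_add_three_mul_sq_eq_zero_iff {p q r s : ℝ} :
    p ^ 2 + 3 * q ^ 2 + 3 * r ^ 2 + 3 * s ^ 2 = 0 ↔ p = 0 ∧ q = 0 ∧ r = 0 ∧ s = 0 := by
  constructor
  · intro h
    refine ⟨?_, ?_, ?_, ?_⟩ <;> apply pow_eq_zero_iff two_ne_zero |>.mp <;>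
      nlinarith [sq_nonneg p, sq_nonneg q, sq_nonneg r, sq_nonneg s]
  · rintro ⟨rfl, rfl, rfl, rfl⟩
    norm_num

section ZeroSum

variable {u v w x y z : ℝ}

lemma sq_add_mul_eq_zero_of_right_eq_zero (hsum : u + v + w = 0) (hy : y * u = 0)
    (hz : z * v = 0) (hT : x ^ 2 + y ^ 2 + z ^ 2 + u * v + v * w + w * u = 0) (hw : w = 0) :
    x ^ 2 + u * v = 0 ∧ y ^ 2 + v * w = 0 ∧ z ^ 2 + w * u = 0 := by
  obtain rfl : v = -u := by linarith
  subst hw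
  rcases eq_or_ne u 0 with rfl | hu
  · refine ⟨?_, ?_, ?_⟩ <;> nlinarith [sq_nonneg x, sq_nonneg y, sq_nonneg z]
  · obtain rfl : y = 0 := (mul_eq_zero.mp hy).resolve_right hu
    obtain rfl : z = 0 := (mul_eq_zero.mp hz).resolve_right (neg_ne_zero.mpr hu)
    refine ⟨?_, ?_, ?_⟩ <;> linarith

lemma sq_add_mul_eq_zero_of_sum_eq_zero (hsum : u + v + w = 0) (hx : x * w = 0)
    (hy : y * u = 0) (hz : z * v = 0) (hT : x ^ 2 + y ^ 2 + z ^ 2 + u * v + v * w + w * u = 0) :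
    x ^ 2 + u * v = 0 ∧ y ^ 2 + v * w = 0 ∧ z ^ 2 + w * u = 0 := by
  have hzero : u = 0 ∨ v = 0 ∨ w = 0 := by
    by_contra! h
    obtain ⟨hu, hv, hw⟩ := h
    obtain rfl : x = 0 := (mul_eq_zero.mp hx).resolve_right hw
    obtain rfl : y = 0 := (mul_eq_zero.mp hy).resolve_right hu
    obtain rfl : z = 0 := (mul_eq_zero.mp hz).resolve_right hv
    -- `2(uv + vw + wu) = (u + v + w)² - (u² + v² + w²)`
    nlinarith [sq_pos_of_ne_zero hu, sq_nonneg v, sq_nonneg w]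
  rcases hzero with hu | hv | hw
  · obtain ⟨h₁, h₂, h₃⟩ := sq_add_mul_eq_zero_of_right_eq_zero (u := v) (v := w) (w := u)
      (x := y) (y := z) (z := x) (by linarith) hz hx (by linarith) hu
    exact ⟨h₃, h₁, h₂⟩
  · obtain ⟨h₁, h₂, h₃⟩ := sq_add_mul_eq_zero_of_right_eq_zero (u := w) (v := u) (w := v)
      (x := z) (y := x) (z := y) (by linarith) hx hy (by linarith) hv
    exact ⟨h₂, h₃, h₁⟩
  · exact sq_add_mul_eq_zero_of_right_eq_zero hsum hy hz hT hw

end ZeroSum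

lemma energy_defect_eq_sum_sq (a b c d e : ℝ) :
    (c^2 + d^2 + e^2 + a^2 + b^2 + a*b)^2 -
        ((a - b)^2 * c^2 + (2*b + a)^2 * d^2 + (2*a + b)^2 * e^2) =
      (c^2 + d^2 + e^2 - a^2 - b^2 - a*b)^2 + 3 * (c * (a + b))^2 + 3 * (d * a)^2 +
        3 * (e * b)^2 := by
  ring

theorem stmt13 (a b c d e : ℝ) :
    (a - b)^2 * c^2 + (2*b + a)^2 * d^2 + (2*a + b)^2 * e^2 ≤
      (c^2 + d^2 + e^2 + a^2 + b^2 + a*b)^2 ∧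
    ((c^2 + d^2 + e^2 + a^2 + b^2 + a*b)^2 =
        (a - b)^2 * c^2 + (2*b + a)^2 * d^2 + (2*a + b)^2 * e^2 ↔
      (c * (a + b) = 0 ∧ c^2 + a*b = 0 ∧ d * a = 0 ∧ d^2 = b^2 + a*b ∧
        e * b = 0 ∧ e^2 = a^2 + a*b)) := by
  have hdefect := energy_defect_eq_sum_sq a b c d e
  refine ⟨sub_nonneg.mp (hdefect ▸ by positivity), ?_⟩
  rw [← sub_eq_zero, hdefect, sq_add_three_mul_sq_eq_zero_iff]
  constructor
  · rintro ⟨hT, hc, hd, he⟩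
    obtain ⟨hX, hY, hZ⟩ := sq_add_mul_eq_zero_of_sum_eq_zero (u := a) (v := b) (w := -(a + b))
      (x := c) (y := d) (z := e) (by ring) (by linear_combination -hc) hd he
      (by linear_combination hT)
    exact ⟨hc, hX, hd, by linear_combination hY, he, by linear_combination hZ⟩
  · rintro ⟨hc, hX, hd, hY, he, hZ⟩
    exact ⟨by linear_combination hX + hY + hZ, hc, hd, he⟩
end

section
/- Let A, C be real numbers with A > C ≥ 0 and let B ∈ ℝ³ with |B| < A − C. Define f : ℝ³ → ℝ by f(a) = A√(1+|a|²) + ⟨B, a⟩ + C/√(1+|a|²). Then f is strictly convex, f(a) → ∞ as |a| → ∞, and f attains its global minimum at a unique point of ℝ³. -/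
open Filter
open scoped RealInnerProductSpace

noncomputable section

abbrev E3 := EuclideanSpace ℝ (Fin 3)

/-!
Write `s(a) = √(1 + ‖a‖²) = ‖(1, a)‖`, so that `f = g ∘ s + ⟪B, ·⟫` with `g σ = A σ + C / σ`.
The function `s` is strictly convex because distinct points `(1, x)`, `(1, y)` never lie on a
common ray of the strictly convex space `ℝ × E`; `g` is convex and, since `A > C ≥ 0`, strictly
increasing on `[1, ∞) ⊇ range s`, so `f` is strictly convex. Coercivity comes from
`f a ≥ (A - ‖B‖) ‖a‖`, and a continuous coercive strictly convex function has exactly one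
minimiser.
-/

open Set

section SqrtOneAddNormSq

variable {E : Type*} [NormedAddCommGroup E]

lemma sqrt_one_add_norm_sq_eq_norm_toLp (a : E) :
    √(1 + ‖a‖ ^ 2) = ‖WithLp.toLp 2 ((1 : ℝ), a)‖ := by
  rw [WithLp.prod_norm_eq_of_L2]
  norm_num

lemma one_le_sqrt_one_add_norm_sq (a : E) : 1 ≤ √(1 + ‖a‖ ^ 2) :=
  Real.le_sqrt_of_sq_le (by nlinarith [sq_nonneg ‖a‖])

lemma norm_le_sqrt_one_add_norm_sq (a : E) : ‖a‖ ≤ √(1 + ‖a‖ ^ 2) :=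
  Real.le_sqrt_of_sq_le (by linarith)

lemma continuous_sqrt_one_add_norm_sq : Continuous fun a : E => √(1 + ‖a‖ ^ 2) := by
  fun_prop

variable [InnerProductSpace ℝ E]

lemma eq_of_sameRay_toLp_one {x y : E}
    (h : SameRay ℝ (WithLp.toLp 2 ((1 : ℝ), x)) (WithLp.toLp 2 ((1 : ℝ), y))) : x = y := by
  have hne : ∀ a : E, WithLp.toLp 2 ((1 : ℝ), a) ≠ 0 := fun a ha => by
    simpa using congrArg (fun v => (WithLp.ofLp v).1) ha
  obtain ⟨r₁, r₂, hr₁, -, hr⟩ := h.exists_pos (hne x) (hne y)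
  have hfst : r₁ = r₂ := by simpa using congrArg (fun v => (WithLp.ofLp v).1) hr
  have hsnd : r₁ • x = r₂ • y := by simpa using congrArg (fun v => (WithLp.ofLp v).2) hr
  rw [← hfst] at hsnd
  exact smul_right_injective E hr₁.ne' hsnd

theorem strictConvexOn_sqrt_one_add_norm_sq :
    StrictConvexOn ℝ univ fun a : E => √(1 + ‖a‖ ^ 2) := by
  refine ⟨convex_univ, fun x _ y _ hxy t u ht hu htu => ?_⟩
  set X : E → WithLp 2 (ℝ × E) := fun a => WithLp.toLp 2 ((1 : ℝ), a)
  have hX : X (t • x + u • y) = t • X x + u • X y := by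
    apply WithLp.ofLp_injective
    ext <;> simp [X, htu]
  have hray : ¬SameRay ℝ (t • X x) (u • X y) := fun h => hxy <| eq_of_sameRay_toLp_one <| by
    simpa [ht.ne', hu.ne'] using (h.pos_smul_left (inv_pos.2 ht)).pos_smul_right (inv_pos.2 hu)
  simp only [smul_eq_mul, sqrt_one_add_norm_sq_eq_norm_toLp]
  calc ‖X (t • x + u • y)‖ = ‖t • X x + u • X y‖ := by rw [hX]
    _ < ‖t • X x‖ + ‖u • X y‖ := norm_add_lt_of_not_sameRay hray
    _ = t * ‖X x‖ + u * ‖X y‖ := by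
      rw [norm_smul, norm_smul, Real.norm_of_nonneg ht.le, Real.norm_of_nonneg hu.le]

end SqrtOneAddNormSq

section MulAddDiv

variable {A C : ℝ}

lemma convexOn_mul_add_div (hA : 0 ≤ A) (hC : 0 ≤ C) :
    ConvexOn ℝ (Ioi 0) fun σ : ℝ => A * σ + C / σ := by
  have hinv : ConvexOn ℝ (Ioi 0) fun σ : ℝ => σ⁻¹ := by
    simpa using convexOn_zpow (𝕜 := ℝ) (-1)
  have hsplit : (fun σ : ℝ => A * σ + C / σ) = (fun σ => A • id σ) + fun σ => C • σ⁻¹ := by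
    funext σ
    simp [div_eq_mul_inv]
  rw [hsplit]
  exact ((convexOn_id (convex_Ioi 0)).smul hA).add (hinv.smul hC)

lemma strictMonoOn_mul_add_div (hCA : C < A) (hC : 0 ≤ C) :
    StrictMonoOn (fun σ : ℝ => A * σ + C / σ) (Ici 1) := by
  intro σ (hσ : 1 ≤ σ) τ (hτ : 1 ≤ τ) hστ
  have hστ1 : 1 ≤ σ * τ := one_le_mul_of_one_le_of_one_le hσ hτ
  have key : A * τ + C / τ - (A * σ + C / σ) = (τ - σ) * (A - C / (σ * τ)) := by
    field_simp
    ring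
  have hdiv : C / (σ * τ) ≤ C := div_le_self hC hστ1
  have : 0 < (τ - σ) * (A - C / (σ * τ)) := mul_pos (by linarith) (by linarith)
  show A * σ + C / σ < A * τ + C / τ
  linarith

end MulAddDiv

section Minimizer

variable {E : Type*} [TopologicalSpace E] [AddCommGroup E] [Module ℝ E]

theorem StrictConvexOn.existsUnique_forall_le {f : E → ℝ} (hf : StrictConvexOn ℝ univ f)
    (hcont : Continuous f) (hf_top : Tendsto f (cocompact E) atTop) :
    ∃! x, ∀ y, f x ≤ f y := by
  obtain ⟨x, hx⟩ := hcont.exists_forall_le hf_top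
  exact ⟨x, hx, fun y hy => hf.eq_of_isMinOn (fun z _ => hy z) (fun z _ => hx z)
    (mem_univ y) (mem_univ x)⟩

end Minimizer

section Energy

variable {E : Type*} [NormedAddCommGroup E] [InnerProductSpace ℝ E]

def smallSphereEnergy (A : ℝ) (B : E) (C : ℝ) (a : E) : ℝ :=
  A * √(1 + ‖a‖ ^ 2) + ⟪B, a⟫ + C / √(1 + ‖a‖ ^ 2)

variable {A C : ℝ} (B : E)

theorem strictConvexOn_smallSphereEnergy (hCA : C < A) (hC : 0 ≤ C) :
    StrictConvexOn ℝ univ (smallSphereEnergy A B C) := by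
  set s := fun a : E => √(1 + ‖a‖ ^ 2)
  have hrange : s '' univ ⊆ Ici 1 := by
    rintro _ ⟨a, -, rfl⟩
    exact one_le_sqrt_one_add_norm_sq a
  have hconvex_range : Convex ℝ (s '' univ) :=
    (isPreconnected_iff_ordConnected.mp
      (isPreconnected_univ.image s continuous_sqrt_one_add_norm_sq.continuousOn)).convex
  have hg := (convexOn_mul_add_div (hC.trans hCA.le) hC).subset
    (hrange.trans fun σ (hσ : 1 ≤ σ) => zero_lt_one.trans_le hσ) hconvex_range
  have hlin : ConvexOn ℝ univ fun a : E => ⟪B, a⟫ := (innerₛₗ ℝ B).convexOn convex_univ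
  have hsplit : smallSphereEnergy A B C =
      ((fun σ => A * σ + C / σ) ∘ s) + fun a => ⟪B, a⟫ := by
    funext a
    simp only [smallSphereEnergy, Function.comp, Pi.add_apply, s]
    ring
  rw [hsplit]
  exact (hg.comp_strictConvexOn strictConvexOn_sqrt_one_add_norm_sq
    ((strictMonoOn_mul_add_div hCA hC).mono hrange)).add_convexOn hlin

lemma sub_norm_mul_norm_le_smallSphereEnergy (hA : 0 ≤ A) (hC : 0 ≤ C) (a : E) :
    (A - ‖B‖) * ‖a‖ ≤ smallSphereEnergy A B C a := by
  have h₁ : A * ‖a‖ ≤ A * √(1 + ‖a‖ ^ 2) :=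
    mul_le_mul_of_nonneg_left (norm_le_sqrt_one_add_norm_sq a) hA
  have h₂ : -(‖B‖ * ‖a‖) ≤ ⟪B, a⟫ := (abs_le.mp (abs_real_inner_le_norm B a)).1
  have h₃ : 0 ≤ C / √(1 + ‖a‖ ^ 2) := by positivity
  rw [smallSphereEnergy]
  linarith

theorem tendsto_smallSphereEnergy_cocompact [ProperSpace E] (hB : ‖B‖ < A - C) (hC : 0 ≤ C) :
    Tendsto (smallSphereEnergy A B C) (cocompact E) atTop := by
  have hA : 0 ≤ A := by linarith [norm_nonneg B]
  exact tendsto_atTop_mono (sub_norm_mul_norm_le_smallSphereEnergy B hA hC)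
    (tendsto_norm_cocompact_atTop.const_mul_atTop (by linarith))

lemma continuous_smallSphereEnergy : Continuous (smallSphereEnergy A B C) := by
  have hs := continuous_sqrt_one_add_norm_sq (E := E)
  exact ((continuous_const.mul hs).add (continuous_const.inner continuous_id)).add
    (continuous_const.div hs fun a => (zero_lt_one.trans_le (one_le_sqrt_one_add_norm_sq a)).ne')

end Energy

theorem stmt15 (A C : ℝ) (hAC : C < A) (hC : 0 ≤ C) (B : E3) (hB : ‖B‖ < A - C)
    (f : E3 → ℝ)
    (hf : f = fun a => A * Real.sqrt (1 + ‖a‖^2) + ⟪B, a⟫ +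
      C / Real.sqrt (1 + ‖a‖^2)) :
    StrictConvexOn ℝ Set.univ f ∧
    Tendsto f (cocompact E3) atTop ∧
    (∃! a₀ : E3, ∀ a : E3, f a₀ ≤ f a) := by
  have hf : f = smallSphereEnergy A B C := hf
  subst hf
  have hconvex := strictConvexOn_smallSphereEnergy B hAC hC
  have htop := tendsto_smallSphereEnergy_cocompact B hB hC
  exact ⟨hconvex, htop, hconvex.existsUnique_forall_le (continuous_smallSphereEnergy B) htop⟩

end
end

section
/- Let A, C ∈ ℝ with A > C ≥ 0, and define g : ℝ³ → ℝ by g(a) = A√(1+|a|²) + C/√(1+|a|²). Then for every a ∈ ℝ³ and every index i, the second partial derivative satisfies ∂²g/∂(a^i)² ≥ (A − C)·(1/a⁰)·(1 − (a^i)²/(a⁰)²) > 0, where a⁰ = √(1+|a|²). -/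
/-!
Along the coordinate line `t ↦ update a i t`, `g` is `A u + C / u` with `u = √(c + t²)` and
`c = 1 + ∑_{j ≠ i} (a j)² ≥ 1`. Its second derivative is `A c / u³ - C (c - 2t²) / u⁵`, while the
claimed bound equals `(A - C) c / u³`; the difference is `C (c (u² - 1) + 2t²) / u⁵ ≥ 0` since
`u ≥ 1`.
-/

open Finset Function

lemma sum_sq_update {ι : Type*} [Fintype ι] [DecidableEq ι] (a : ι → ℝ) (i : ι) (t : ℝ) :
    ∑ j, update a i t j ^ 2 = t ^ 2 + ∑ j ∈ univ \ {i}, a j ^ 2 := by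
  simp_rw [apply_update (fun _ x => x ^ 2) a i t]
  exact sum_update_of_mem (mem_univ i) _ _

section

variable {c : ℝ}

lemma hasDerivAt_sqrt_add_sq (hc : 0 < c) (t : ℝ) :
    HasDerivAt (fun s => √(c + s ^ 2)) (t / √(c + t ^ 2)) t := by
  have hpos : 0 < √(c + t ^ 2) := Real.sqrt_pos.2 (by positivity)
  refine (((hasDerivAt_pow 2 t).const_add c).sqrt (by positivity)).congr_deriv ?_
  field_simp
  ring

lemma hasDerivAt_div_sqrt_add_sq_pow (hc : 0 < c) (n : ℕ) (t : ℝ) :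
    HasDerivAt (fun s => s / √(c + s ^ 2) ^ n)
      ((c + (1 - n) * t ^ 2) / √(c + t ^ 2) ^ (n + 2)) t := by
  have hpos : 0 < √(c + t ^ 2) := Real.sqrt_pos.2 (by positivity)
  have hsq : √(c + t ^ 2) ^ 2 = c + t ^ 2 := Real.sq_sqrt (by positivity)
  refine ((hasDerivAt_id' t).fun_div ((hasDerivAt_sqrt_add_sq hc t).fun_pow n)
    (pow_pos hpos n).ne').congr_deriv ?_
  generalize √(c + t ^ 2) = u at hpos hsq ⊢
  obtain rfl : c = u ^ 2 - t ^ 2 := by linarith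
  rcases n with _ | n
  · field_simp
    ring
  · simp only [Nat.cast_succ, Nat.add_sub_cancel]
    field_simp
    ring

variable (A C : ℝ)

lemma deriv_mul_sqrt_add_div_sqrt (hc : 0 < c) :
    deriv (fun t => A * √(c + t ^ 2) + C / √(c + t ^ 2)) =
      fun t => A * (t / √(c + t ^ 2) ^ 1) - C * (t / √(c + t ^ 2) ^ 3) := by
  funext t
  have hpos : 0 < √(c + t ^ 2) := Real.sqrt_pos.2 (by positivity)
  refine HasDerivAt.deriv ?_
  refine (((hasDerivAt_sqrt_add_sq hc t).const_mul A).add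
    ((hasDerivAt_const t C).fun_div (hasDerivAt_sqrt_add_sq hc t) hpos.ne')).congr_deriv ?_
  field_simp
  ring

lemma iteratedDeriv_two_mul_sqrt_add_div_sqrt (hc : 0 < c) (t : ℝ) :
    iteratedDeriv 2 (fun t => A * √(c + t ^ 2) + C / √(c + t ^ 2)) t =
      A * c / √(c + t ^ 2) ^ 3 - C * (c - 2 * t ^ 2) / √(c + t ^ 2) ^ 5 := by
  rw [iteratedDeriv_succ, iteratedDeriv_one, deriv_mul_sqrt_add_div_sqrt A C hc]
  refine ((((hasDerivAt_div_sqrt_add_sq_pow hc 1 t).const_mul A).sub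
    ((hasDerivAt_div_sqrt_add_sq_pow hc 3 t).const_mul C)).deriv).trans ?_
  norm_num
  ring

lemma sub_mul_div_sqrt_pow_three_le {A C : ℝ} (hC : 0 ≤ C) (hc : 1 ≤ c) (t : ℝ) :
    (A - C) * c / √(c + t ^ 2) ^ 3 ≤
      A * c / √(c + t ^ 2) ^ 3 - C * (c - 2 * t ^ 2) / √(c + t ^ 2) ^ 5 := by
  set u := √(c + t ^ 2)
  have hu : 0 < u := Real.sqrt_pos.2 (by positivity)
  have hsq : u ^ 2 = c + t ^ 2 := Real.sq_sqrt (by positivity)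
  rw [← sub_nonneg]
  have : A * c / u ^ 3 - C * (c - 2 * t ^ 2) / u ^ 5 - (A - C) * c / u ^ 3 =
      C * (c * (u ^ 2 - 1) + 2 * t ^ 2) / u ^ 5 := by
    field_simp
    ring
  rw [this]
  have : 0 ≤ u ^ 2 - 1 := by nlinarith [sq_nonneg t]
  positivity

end

theorem stmt16 (A C : ℝ) (hAC : C < A) (hC : 0 ≤ C)
    (g : (Fin 3 → ℝ) → ℝ)
    (hg : g = fun a => A * Real.sqrt (1 + ∑ j : Fin 3, (a j)^2) +
      C / Real.sqrt (1 + ∑ j : Fin 3, (a j)^2))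
    (a : Fin 3 → ℝ) (i : Fin 3) (a0 : ℝ)
    (ha0 : a0 = Real.sqrt (1 + ∑ j : Fin 3, (a j)^2)) :
    iteratedDeriv 2 (fun t => g (Function.update a i t)) (a i) ≥
      (A - C) * (1 / a0) * (1 - (a i)^2 / a0^2) ∧
    0 < (A - C) * (1 / a0) * (1 - (a i)^2 / a0^2) := by
  set c := 1 + ∑ j ∈ univ \ {i}, a j ^ 2
  have hc : 1 ≤ c := le_add_of_nonneg_right (sum_nonneg fun j _ => sq_nonneg (a j))
  have hsum (t : ℝ) : 1 + ∑ j, update a i t j ^ 2 = c + t ^ 2 := by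
    rw [sum_sq_update]
    ring
  have hline : (fun t => g (update a i t)) = fun t => A * √(c + t ^ 2) + C / √(c + t ^ 2) := by
    simp only [hg, hsum]
  have ha0' : a0 = √(c + a i ^ 2) := by
    rw [ha0, ← hsum, update_eq_self]
  have hpos : 0 < a0 := ha0' ▸ Real.sqrt_pos.2 (by positivity)
  have hcoef : (A - C) * (1 / a0) * (1 - a i ^ 2 / a0 ^ 2) = (A - C) * c / a0 ^ 3 := by
    have hsq : a0 ^ 2 = c + a i ^ 2 := ha0' ▸ Real.sq_sqrt (by positivity)
    field_simp
    rw [hsq]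
    ring
  rw [hline, iteratedDeriv_two_mul_sqrt_add_div_sqrt A C (by linarith), hcoef, ha0']
  exact ⟨sub_mul_div_sqrt_pow_three_le hC hc (a i),
    div_pos (mul_pos (sub_pos.2 hAC) (by linarith)) (by positivity)⟩
end

section
/- Let D and E be symmetric traceless 3×3 real matrices, let W_{imn} := Σ_k ε_{mnk} E_{ik}, and define the four-vector V = (V⁰, V¹, V², V³) by V⁰ = ½ Σ_{i,m,n} W_{imn}² + Σ_{m,n} D_{mn}² and V^i = 2 Σ_{m,n} D_{mn} W_{min}. Then (V⁰)² ≥ Σ_i (V^i)², i.e., V is a non-spacelike (causal) vector with V⁰ ≥ 0. -/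
/-- The Levi-Civita symbol on three indices. -/
noncomputable def eps3 (i j k : Fin 3) : ℝ :=
  (((j : ℤ) - (i : ℤ)) * ((k : ℤ) - (i : ℤ)) * ((k : ℤ) - (j : ℤ))) / 2

set_option maxHeartbeats 2000000 in
lemma cs9 (g1 g2 g3 g4 g5 g6 g7 g8 g9 x1 x2 x3 x4 x5 x6 x7 x8 x9 : ℝ) :
    (g1*x1+g2*x2+g3*x3+g4*x4+g5*x5+g6*x6+g7*x7+g8*x8+g9*x9)^2 ≤ (g1^2+g2^2+g3^2+g4^2+g5^2+g6^2+g7^2+g8^2+g9^2)*(x1^2+x2^2+x3^2+x4^2+x5^2+x6^2+x7^2+x8^2+x9^2) := by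
  have h : (g1^2+g2^2+g3^2+g4^2+g5^2+g6^2+g7^2+g8^2+g9^2)*(x1^2+x2^2+x3^2+x4^2+x5^2+x6^2+x7^2+x8^2+x9^2) - ((g1*x1+g2*x2+g3*x3+g4*x4+g5*x5+g6*x6+g7*x7+g8*x8+g9*x9))^2 = (g1*x2 - g2*x1)^2 + (g1*x3 - g3*x1)^2 + (g1*x4 - g4*x1)^2 + (g1*x5 - g5*x1)^2 + (g1*x6 - g6*x1)^2 + (g1*x7 - g7*x1)^2 + (g1*x8 - g8*x1)^2 + (g1*x9 - g9*x1)^2 + (g2*x3 - g3*x2)^2 + (g2*x4 - g4*x2)^2 + (g2*x5 - g5*x2)^2 + (g2*x6 - g6*x2)^2 + (g2*x7 - g7*x2)^2 + (g2*x8 - g8*x2)^2 + (g2*x9 - g9*x2)^2 + (g3*x4 - g4*x3)^2 + (g3*x5 - g5*x3)^2 + (g3*x6 - g6*x3)^2 + (g3*x7 - g7*x3)^2 + (g3*x8 - g8*x3)^2 + (g3*x9 - g9*x3)^2 + (g4*x5 - g5*x4)^2 + (g4*x6 - g6*x4)^2 + (g4*x7 - g7*x4)^2 + (g4*x8 - g8*x4)^2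 + (g4*x9 - g9*x4)^2 + (g5*x6 - g6*x5)^2 + (g5*x7 - g7*x5)^2 + (g5*x8 - g8*x5)^2 + (g5*x9 - g9*x5)^2 + (g6*x7 - g7*x6)^2 + (g6*x8 - g8*x6)^2 + (g6*x9 - g9*x6)^2 + (g7*x8 - g8*x7)^2 + (g7*x9 - g9*x7)^2 + (g8*x9 - g9*x8)^2 := by ring
  have h2 : (0:ℝ) ≤ (g1*x2 - g2*x1)^2 + (g1*x3 - g3*x1)^2 + (g1*x4 - g4*x1)^2 + (g1*x5 - g5*x1)^2 + (g1*x6 - g6*x1)^2 + (g1*x7 - g7*x1)^2 + (g1*x8 - g8*x1)^2 + (g1*x9 - g9*x1)^2 + (g2*x3 - g3*x2)^2 + (g2*x4 - g4*x2)^2 + (g2*x5 - g5*x2)^2 + (g2*x6 - g6*x2)^2 + (g2*x7 - g7*x2)^2 + (g2*x8 - g8*x2)^2 + (g2*x9 - g9*x2)^2 + (g3*x4 - g4*x3)^2 + (g3*x5 - g5*x3)^2 + (g3*x6 - g6*x3)^2 + (g3*x7 - g7*x3)^2 + (g3*x8 - g8*x3)^2 + (g3*x9 - g9*x3)^2 +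 (g4*x5 - g5*x4)^2 + (g4*x6 - g6*x4)^2 + (g4*x7 - g7*x4)^2 + (g4*x8 - g8*x4)^2 + (g4*x9 - g9*x4)^2 + (g5*x6 - g6*x5)^2 + (g5*x7 - g7*x5)^2 + (g5*x8 - g8*x5)^2 + (g5*x9 - g9*x5)^2 + (g6*x7 - g7*x6)^2 + (g6*x8 - g8*x6)^2 + (g6*x9 - g9*x6)^2 + (g7*x8 - g8*x7)^2 + (g7*x9 - g9*x7)^2 + (g8*x9 - g9*x8)^2 := by positivity
  linarith

set_option maxHeartbeats 1000000 in
lemma key_abstract (nX nY nz nYz gx gg : ℝ)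
    (h1 : gx = nz) (h2 : gg = nY*nz - nYz)
    (hcs : gx^2 ≤ gg*nX)
    (hX : 0 ≤ nX) (hz : 0 ≤ nz) (hYz2 : 0 ≤ nYz) : 4*nz ≤ (nX+nY)^2 := by
  rw [h1, h2] at hcs
  have h4 : nz^2 ≤ nX*nY*nz := by nlinarith [mul_nonneg hX hYz2]
  rcases hz.eq_or_lt with h | h
  · nlinarith [sq_nonneg (nX+nY)]
  · have h5 : nz ≤ nX*nY := le_of_mul_le_mul_right (by nlinarith) h
    nlinarith [sq_nonneg (nX - nY)]

set_option maxHeartbeats 4000000 in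
lemma key (a b p q r c d u v w : ℝ) :
    4*(((-2)*r*d + (-1)*r*c + (-1)*q*u + p*v + 2*b*w + a*w)^2 + (r*u + q*d + 2*q*c + (-1)*p*w + (-1)*b*v + (-2)*a*v)^2 + ((-1)*r*v + q*w + p*d + (-1)*p*c + (-1)*b*u + a*u)^2) ≤ ((a^2+p^2+q^2+p^2+b^2+r^2+q^2+r^2+(-a-b)^2) + (c^2+u^2+v^2+u^2+d^2+w^2+v^2+w^2+(-c-d)^2))^2 := by
  have hcs := cs9 ((-2)*r*u*v + q*u*w + (-1)*q*d*v + (-2)*q*c*v + p*v*w + p*d*u + (-1)*p*c*u + b*v^2 + (-1)*b*u^2 + 2*a*v^2 + a*u^2) ((-1)*r*u*w + (-1)*r*d*v + (-2)*q*c*w + p*w^2 + p*d^2 + (-1)*p*c*d + b*v*w + (-1)*b*d*u + 2*a*v*w + a*d*u) ((-1)*r*v*w + r*d*u + r*c*u + q*w^2 + q*d^2 + 3*q*c*d + 2*q*c^2 + (-2)*p*c*w + (-1)*b*u*w + (-1)*b*d*v + (-1)*b*c*v + a*u*w + (-2)*a*d*v + (-2)*a*c*v) ((-2)*r*d*v +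 (-1)*q*u*v + (-1)*q*c*w + p*v^2 + (-1)*p*c*d + p*c^2 + 2*b*v*w + b*c*u + a*v*w + (-1)*a*c*u) (r*u*v + (-2)*r*d*w + (-1)*r*c*w + (-2)*q*u*w + p*v*w + (-1)*p*d*u + p*c*u + 2*b*w^2 + b*u^2 + a*w^2 + (-1)*a*u^2) (r*v^2 + 2*r*d^2 + 3*r*c*d + r*c^2 + (-1)*q*v*w + q*d*u + q*c*u + (-2)*p*d*v + b*u*v + (-2)*b*d*w + (-2)*b*c*w + (-1)*a*u*v + (-1)*a*d*w + (-1)*a*c*w) (2*r*d*u + 2*r*c*u + q*u^2 + q*c*d + 2*q*c^2 + (-1)*p*u*v + (-1)*p*c*w + (-2)*b*u*w + (-1)*b*c*v + (-1)*a*u*w + (-2)*a*c*v) (r*u^2 + 2*r*d^2 + r*c*d + 2*q*d*u + 2*q*c*u + (-1)*p*u*w + (-1)*p*d*v + (-1)*b*u*v + (-2)*b*d*w + (-2)*a*u*v + (-1)*a*d*w) (r*u*v + 2*r*d*w + r*c*w + q*u*w + q*d*v + 2*q*c*v + (-2)*p*v*w + (-2)*b*w^2 + (-1)*b*v^2 +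 (-1)*a*w^2 + (-2)*a*v^2) a p q p b r q r (-a-b)
  have h1 : ((-2)*r*u*v + q*u*w + (-1)*q*d*v + (-2)*q*c*v + p*v*w + p*d*u + (-1)*p*c*u + b*v^2 + (-1)*b*u^2 + 2*a*v^2 + a*u^2)*a+((-1)*r*u*w + (-1)*r*d*v + (-2)*q*c*w + p*w^2 + p*d^2 + (-1)*p*c*d + b*v*w + (-1)*b*d*u + 2*a*v*w + a*d*u)*p+((-1)*r*v*w + r*d*u + r*c*u + q*w^2 + q*d^2 + 3*q*c*d + 2*q*c^2 + (-2)*p*c*w + (-1)*b*u*w + (-1)*b*d*v + (-1)*b*c*v + a*u*w + (-2)*a*d*v + (-2)*a*c*v)*q+((-2)*r*d*v + (-1)*q*u*v + (-1)*q*c*w + p*v^2 + (-1)*p*c*d + p*c^2 + 2*b*v*w + b*c*u + a*v*w + (-1)*a*c*u)*p+(r*u*v + (-2)*r*d*w + (-1)*r*c*w + (-2)*q*u*w + p*v*w + (-1)*p*d*u + p*c*u + 2*b*w^2 + b*u^2 + a*w^2 + (-1)*a*u^2)*b+(r*v^2 + 2*r*d^2 + 3*r*c*d + r*c^2 + (-1)*q*v*w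 + q*d*u + q*c*u + (-2)*p*d*v + b*u*v + (-2)*b*d*w + (-2)*b*c*w + (-1)*a*u*v + (-1)*a*d*w + (-1)*a*c*w)*r+(2*r*d*u + 2*r*c*u + q*u^2 + q*c*d + 2*q*c^2 + (-1)*p*u*v + (-1)*p*c*w + (-2)*b*u*w + (-1)*b*c*v + (-1)*a*u*w + (-2)*a*c*v)*q+(r*u^2 + 2*r*d^2 + r*c*d + 2*q*d*u + 2*q*c*u + (-1)*p*u*w + (-1)*p*d*v + (-1)*b*u*v + (-2)*b*d*w + (-2)*a*u*v + (-1)*a*d*w)*r+(r*u*v + 2*r*d*w + r*c*w + q*u*w + q*d*v + 2*q*c*v + (-2)*p*v*w + (-2)*b*w^2 + (-1)*b*v^2 + (-1)*a*w^2 + (-2)*a*v^2)*(-a-b) = ((-2)*r*d + (-1)*r*c + (-1)*q*u + p*v + 2*b*w + a*w)^2 + (r*u + q*d + 2*q*c + (-1)*p*w + (-1)*b*v + (-2)*a*v)^2 + ((-1)*r*v + q*w + p*d + (-1)*p*c + (-1)*b*u + a*u)^2 := by ring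
  have h2 : ((-2)*r*u*v + q*u*w + (-1)*q*d*v + (-2)*q*c*v + p*v*w + p*d*u + (-1)*p*c*u + b*v^2 + (-1)*b*u^2 + 2*a*v^2 + a*u^2)^2+((-1)*r*u*w + (-1)*r*d*v + (-2)*q*c*w + p*w^2 + p*d^2 + (-1)*p*c*d + b*v*w + (-1)*b*d*u + 2*a*v*w + a*d*u)^2+((-1)*r*v*w + r*d*u + r*c*u + q*w^2 + q*d^2 + 3*q*c*d + 2*q*c^2 + (-2)*p*c*w + (-1)*b*u*w + (-1)*b*d*v + (-1)*b*c*v + a*u*w + (-2)*a*d*v + (-2)*a*c*v)^2+((-2)*r*d*v + (-1)*q*u*v + (-1)*q*c*w + p*v^2 + (-1)*p*c*d + p*c^2 + 2*b*v*w + b*c*u + a*v*w + (-1)*a*c*u)^2+(r*u*v + (-2)*r*d*w + (-1)*r*c*w + (-2)*q*u*w + p*v*w + (-1)*p*d*u + p*c*u + 2*b*w^2 + b*u^2 + a*w^2 + (-1)*a*u^2)^2+(r*v^2 + 2*r*d^2 + 3*r*c*d + r*c^2 + (-1)*q*v*w + q*d*u + q*c*u + (-2)*p*d*v + b*u*v +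 (-2)*b*d*w + (-2)*b*c*w + (-1)*a*u*v + (-1)*a*d*w + (-1)*a*c*w)^2+(2*r*d*u + 2*r*c*u + q*u^2 + q*c*d + 2*q*c^2 + (-1)*p*u*v + (-1)*p*c*w + (-2)*b*u*w + (-1)*b*c*v + (-1)*a*u*w + (-2)*a*c*v)^2+(r*u^2 + 2*r*d^2 + r*c*d + 2*q*d*u + 2*q*c*u + (-1)*p*u*w + (-1)*p*d*v + (-1)*b*u*v + (-2)*b*d*w + (-2)*a*u*v + (-1)*a*d*w)^2+(r*u*v + 2*r*d*w + r*c*w + q*u*w + q*d*v + 2*q*c*v + (-2)*p*v*w + (-2)*b*w^2 + (-1)*b*v^2 + (-1)*a*w^2 + (-2)*a*v^2)^2 = (c^2+u^2+v^2+u^2+d^2+w^2+v^2+w^2+(-c-d)^2)*(((-2)*r*d + (-1)*r*c + (-1)*q*u + p*v + 2*b*w + a*w)^2 + (r*u + q*d + 2*q*c + (-1)*p*w + (-1)*b*v + (-2)*a*v)^2 + ((-1)*r*v + q*w + p*d + (-1)*p*c + (-1)*b*u + a*u)^2) - (((-1)*r*v^2 + r*u^2 + (-2)*r*c*d + (-1)*r*c^2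 + q*v*w + q*d*u + q*c*u + (-1)*p*u*w + p*d*v + (-2)*b*u*v + 2*b*c*w + (-1)*a*u*v + a*c*w)^2 + ((-1)*r*v*w + (-1)*r*d*u + (-1)*r*c*u + q*w^2 + (-1)*q*u^2 + q*d^2 + 2*q*c*d + p*u*v + (-1)*p*c*w + b*u*w + (-1)*b*d*v + 2*a*u*w + (-2)*a*d*v)^2 + (r*u*w + (-1)*r*d*v + (-1)*q*u*v + q*c*w + (-1)*p*w^2 + p*v^2 + (-1)*p*d^2 + p*c^2 + b*v*w + b*d*u + b*c*u + (-1)*a*v*w + (-1)*a*d*u + (-1)*a*c*u)^2) := by ring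
  rw [h1, h2] at hcs
  have hX : (0:ℝ) ≤ a^2+p^2+q^2+p^2+b^2+r^2+q^2+r^2+(-a-b)^2 := by positivity
  have hz : (0:ℝ) ≤ ((-2)*r*d + (-1)*r*c + (-1)*q*u + p*v + 2*b*w + a*w)^2 + (r*u + q*d + 2*q*c + (-1)*p*w + (-1)*b*v + (-2)*a*v)^2 + ((-1)*r*v + q*w + p*d + (-1)*p*c + (-1)*b*u + a*u)^2 := by positivity
  have hYz2 : (0:ℝ) ≤ ((-1)*r*v^2 + r*u^2 + (-2)*r*c*d + (-1)*r*c^2 + q*v*w + q*d*u + q*c*u + (-1)*p*u*w + p*d*v + (-2)*b*u*v + 2*b*c*w + (-1)*a*u*v + a*c*w)^2 + ((-1)*r*v*w + (-1)*r*d*u + (-1)*r*c*u + q*w^2 + (-1)*q*u^2 + q*d^2 + 2*q*c*d + p*u*v + (-1)*p*c*w + b*u*w + (-1)*b*d*v + 2*a*u*w + (-2)*a*d*v)^2 + (r*u*w + (-1)*r*d*v + (-1)*q*u*v + q*c*w + (-1)*p*w^2 + p*v^2 + (-1)*p*d^2 + p*c^2 + b*v*w + b*d*u + b*c*u + (-1)*a*v*w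 + (-1)*a*d*u + (-1)*a*c*u)^2 := by positivity
  exact key_abstract _ _ _ _ _ _ rfl rfl hcs hX hz hYz2

theorem stmt19 (D E : Matrix (Fin 3) (Fin 3) ℝ)
    (hDsym : D.IsSymm) (hDtr : D.trace = 0)
    (hEsym : E.IsSymm) (hEtr : E.trace = 0)
    (W : Fin 3 → Fin 3 → Fin 3 → ℝ)
    (hW : W = fun i m n => ∑ k : Fin 3, eps3 m n k * E i k)
    (V0 : ℝ) (Vi : Fin 3 → ℝ)
    (hV0 : V0 = (1/2) * (∑ i : Fin 3, ∑ m : Fin 3, ∑ n : Fin 3, (W i m n)^2) +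
      ∑ m : Fin 3, ∑ n : Fin 3, (D m n)^2)
    (hVi : Vi = fun i => 2 * ∑ m : Fin 3, ∑ n : Fin 3, D m n * W m i n) :
    0 ≤ V0 ∧ ∑ i : Fin 3, (Vi i)^2 ≤ V0^2 := by
  have hD10 : D 1 0 = D 0 1 := hDsym.apply 0 1
  have hD20 : D 2 0 = D 0 2 := hDsym.apply 0 2
  have hD21 : D 2 1 = D 1 2 := hDsym.apply 1 2
  have hE10 : E 1 0 = E 0 1 := hEsym.apply 0 1
  have hE20 : E 2 0 = E 0 2 := hEsym.apply 0 2
  have hE21 : E 2 1 = E 1 2 := hEsym.apply 1 2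
  have hD22 : D 2 2 = -D 0 0 - D 1 1 := by
    simp [Matrix.trace, Matrix.diag, Fin.sum_univ_three] at hDtr; linarith
  have hE22 : E 2 2 = -E 0 0 - E 1 1 := by
    simp [Matrix.trace, Matrix.diag, Fin.sum_univ_three] at hEtr; linarith
  subst hW hV0 hVi
  constructor
  · positivity
  · have k := key (D 0 0) (D 1 1) (D 0 1) (D 0 2) (D 1 2) (E 0 0) (E 1 1) (E 0 1) (E 0 2) (E 1 2)
    simp only [Fin.sum_univ_three]
    norm_num [eps3, hD10, hD20, hD21, hE10, hE20, hE21, hD22, hE22]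
    linarith [k]
end
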